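/- arXiv:2506.03595 — 2 statements merged into one kernel-verified Lean document; each statement's English description precedes it below -/
import Mathlib

section
/- Let m, n be positive integers, let Q_L ∈ ℝ^{m×m} and Q_R ∈ ℝ^{n×n} be orthogonal matrices, let D ∈ ℝ^{m×n} have all entries strictly positive, let G ∈ ℝ^{m×n}, and let p > 0. Define U = Q_L (D^{⊙(-p)} ⊙ (Q_Lᵀ G Q_R)) Q_Rᵀ ∈ ℝ^{m×n}, where D^{⊙(-p)} is the entrywise (-p)-th power. Then (max_{i,j} D_{i,j})^{-p} · ‖G‖_F ≤ ‖U‖_F ≤ (min_{i,j} D_{i,j})^{-p} · ‖G‖_F. -/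
open Matrix Finset

/-! Orthogonal conjugation preserves the Frobenius norm, so `‖U‖_F = ‖S ⊙ H‖_F` and
`‖G‖_F = ‖H‖_F` for `H = Q_Lᵀ G Q_R` and `S = D^{⊙(-p)}`; the entries of `S` lie between
`(max D)^{-p}` and `(min D)^{-p}`, and an entrywise scaling by factors in `[a, b]` changes the
Frobenius norm by a factor in `[a, b]`. -/

/-- Frobenius norm of a real matrix: square root of the sum of squares of all entries. -/
noncomputable def frobeniusNorm' {m n : Type*} [Fintype m] [Fintype n]
    (M : Matrix m n ℝ) : ℝ :=
  Real.sqrt (∑ i, ∑ j, (M i j) ^ 2)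

section FrobeniusNorm

variable {m n : Type*} [Fintype m] [Fintype n]

lemma frobeniusNorm'_le_of_abs_le {A B : Matrix m n ℝ} (h : ∀ i j, |A i j| ≤ |B i j|) :
    frobeniusNorm' A ≤ frobeniusNorm' B :=
  Real.sqrt_le_sqrt <| sum_le_sum fun i _ => sum_le_sum fun j _ => sq_le_sq.2 (h i j)

lemma frobeniusNorm'_smul (c : ℝ) (M : Matrix m n ℝ) :
    frobeniusNorm' (c • M) = |c| * frobeniusNorm' M := by
  simp only [frobeniusNorm', Matrix.smul_apply, smul_eq_mul, mul_pow, ← mul_sum]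
  rw [Real.sqrt_mul (sq_nonneg c), Real.sqrt_sq_eq_abs]

lemma frobeniusNorm'_hadamard_le {S H : Matrix m n ℝ} {b : ℝ} (hb : 0 ≤ b)
    (hS : ∀ i j, |S i j| ≤ b) : frobeniusNorm' (S ⊙ H) ≤ b * frobeniusNorm' H := by
  calc frobeniusNorm' (S ⊙ H) ≤ frobeniusNorm' (b • H) :=
        frobeniusNorm'_le_of_abs_le fun i j => by
          rw [hadamard_apply, Matrix.smul_apply, smul_eq_mul, abs_mul, abs_mul, abs_of_nonneg hb]
          exact mul_le_mul_of_nonneg_right (hS i j) (abs_nonneg _)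
    _ = b * frobeniusNorm' H := by rw [frobeniusNorm'_smul, abs_of_nonneg hb]

lemma le_frobeniusNorm'_hadamard {S H : Matrix m n ℝ} {a : ℝ} (ha : 0 ≤ a)
    (hS : ∀ i j, a ≤ |S i j|) : a * frobeniusNorm' H ≤ frobeniusNorm' (S ⊙ H) := by
  calc a * frobeniusNorm' H = frobeniusNorm' (a • H) := by
        rw [frobeniusNorm'_smul, abs_of_nonneg ha]
    _ ≤ frobeniusNorm' (S ⊙ H) :=
        frobeniusNorm'_le_of_abs_le fun i j => by
          rw [hadamard_apply, Matrix.smul_apply, smul_eq_mul, abs_mul, abs_mul, abs_of_nonneg ha]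
          exact mul_le_mul_of_nonneg_right (hS i j) (abs_nonneg _)

lemma frobeniusNorm'_eq_sqrt_trace (M : Matrix m n ℝ) :
    frobeniusNorm' M = Real.sqrt (trace (Mᵀ * M)) := by
  rw [frobeniusNorm', sum_comm]
  simp [trace, mul_apply, sq]

lemma frobeniusNorm'_mul_mul_transpose {m' n' : Type*} [Fintype m'] [Fintype n']
    [DecidableEq m] [DecidableEq n] {QL : Matrix m' m ℝ} {QR : Matrix n' n ℝ}
    (hQL : QLᵀ * QL = 1) (hQR : QRᵀ * QR = 1) (X : Matrix m n ℝ) :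
    frobeniusNorm' (QL * X * QRᵀ) = frobeniusNorm' X := by
  have hGram : (QL * X * QRᵀ)ᵀ * (QL * X * QRᵀ) = QR * (Xᵀ * X) * QRᵀ := by
    simp only [transpose_mul, transpose_transpose, Matrix.mul_assoc]
    rw [← Matrix.mul_assoc QLᵀ, hQL, Matrix.one_mul]
  rw [frobeniusNorm'_eq_sqrt_trace, frobeniusNorm'_eq_sqrt_trace, hGram, trace_mul_cycle,
    ← Matrix.mul_assoc, hQR, Matrix.one_mul]

end FrobeniusNorm

/-- For orthogonal `Q_L ∈ ℝ^{m×m}`, `Q_R ∈ ℝ^{n×n}`, an entrywise-positive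
scaling matrix `D ∈ ℝ^{m×n}`, a gradient `G ∈ ℝ^{m×n}` and `p > 0`, the generalized
eigendecomposed Kronecker-factored update
`U = Q_L (D^{⊙(-p)} ⊙ (Q_Lᵀ G Q_R)) Q_Rᵀ` satisfies
`(max_{i,j} D_{i,j})^{-p} ‖G‖_F ≤ ‖U‖_F ≤ (min_{i,j} D_{i,j})^{-p} ‖G‖_F`. -/
theorem stmt_0 (m n : ℕ) [NeZero m] [NeZero n]
    (QL : Matrix (Fin m) (Fin m) ℝ) (QR : Matrix (Fin n) (Fin n) ℝ)
    (hQL : QLᵀ * QL = 1) (hQR : QRᵀ * QR = 1)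
    (D G : Matrix (Fin m) (Fin n) ℝ) (hD : ∀ i j, 0 < D i j)
    (p : ℝ) (hp : 0 < p)
    (U : Matrix (Fin m) (Fin n) ℝ)
    (hU : U = QL * (Matrix.of fun i j => (D i j) ^ (-p) * ((QLᵀ * G * QR) i j)) * QRᵀ) :
    (Finset.univ.sup' Finset.univ_nonempty (fun ij : Fin m × Fin n => D ij.1 ij.2)) ^ (-p)
        * frobeniusNorm' G ≤ frobeniusNorm' U ∧
      frobeniusNorm' U ≤
        (Finset.univ.inf' Finset.univ_nonempty (fun ij : Fin m × Fin n => D ij.1 ij.2)) ^ (-p)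
          * frobeniusNorm' G := by
  set Dmax := univ.sup' univ_nonempty (fun ij : Fin m × Fin n => D ij.1 ij.2)
  set Dmin := univ.inf' univ_nonempty (fun ij : Fin m × Fin n => D ij.1 ij.2)
  set S : Matrix (Fin m) (Fin n) ℝ := of fun i j => D i j ^ (-p)
  have hG : frobeniusNorm' G = frobeniusNorm' (QLᵀ * G * QR) := by
    conv_rhs => rw [← transpose_transpose QR]
    refine (frobeniusNorm'_mul_mul_transpose ?_ ?_ G).symm <;>
      rw [transpose_transpose] <;> exact mul_eq_one_comm.mp ‹_›
  have hUS : frobeniusNorm' U = frobeniusNorm' (S ⊙ (QLᵀ * G * QR)) := by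
    rw [hU]; exact frobeniusNorm'_mul_mul_transpose hQL hQR _
  have hDmax : 0 < Dmax := (hD 0 0).trans_le (le_sup' (fun ij : Fin m × Fin n => D ij.1 ij.2)
    (mem_univ (0, 0)))
  have hDmin : 0 < Dmin := (lt_inf'_iff _).2 fun ij _ => hD ij.1 ij.2
  have hS (i j) : |S i j| = D i j ^ (-p) := abs_of_pos (Real.rpow_pos_of_pos (hD i j) _)
  rw [hG, hUS]
  constructor
  · refine le_frobeniusNorm'_hadamard (Real.rpow_nonneg hDmax.le _) fun i j => ?_
    rw [hS]
    exact Real.rpow_le_rpow_of_nonpos (hD i j)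
      (le_sup' (fun ij : Fin m × Fin n => D ij.1 ij.2) (mem_univ (i, j))) (neg_nonpos.2 hp.le)
  · refine frobeniusNorm'_hadamard_le (Real.rpow_nonneg hDmin.le _) fun i j => ?_
    rw [hS]
    exact Real.rpow_le_rpow_of_nonpos hDmin
      (inf'_le (fun ij : Fin m × Fin n => D ij.1 ij.2) (mem_univ (i, j))) (neg_nonpos.2 hp.le)
end

section
/- Let m, n be positive integers. Let Q_L ∈ ℝ^{m×m} and Q_R ∈ ℝ^{n×n} be orthogonal and let Λ_L ∈ ℝ^{m×m}, Λ_R ∈ ℝ^{n×n} be diagonal with nonnegative entries. Set Q = Q_R ⊗ Q_L and define the Shampoo preconditioner C^Shampoo = Q (Λ_R ⊗ Λ_L)^{1/2} Qᵀ, where (Λ_R ⊗ Λ_L)^{1/2} is the diagonal matrix with the entrywise square roots of the diagonal of Λ_R ⊗ Λ_L. Then for every matrix C ∈ ℝ^{(mn)×(mn)}, ‖C - Q · diag(Qᵀ C Q) · Qᵀ‖_F ≤ ‖C - C^Shampoo‖_F, i.e., the optimal eigenvalue correction in Shampoo's eigenbasis yields a Frobenius-norm approximation of C at least as tight as Shampoo's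 preconditioner. -/
/-
Conjugation by an orthogonal matrix preserves the Frobenius norm, so both sides can be measured
after conjugating by `Qᵀ`: with `M = Qᵀ C Q`, the left side becomes `‖M - diag M‖_F` and the
right side `‖M - D‖_F` for the diagonal matrix `D = (Λ_R ⊗ Λ_L)^{1/2}`. Off the diagonal the two
differences agree, and on the diagonal the left one vanishes.
-/

open Matrix Finset Kronecker

/-- The diagonal part of a square matrix: zero out all off-diagonal entries. -/
def diagPart {d : Type*} [DecidableEq d] (M : Matrix d d ℝ) : Matrix d d ℝ :=
  Matrix.diagonal (fun i => M i i)

theorem kronecker_transpose_mul_self_eq_one {R m n : Type*} [CommSemiring R] [Fintype m]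
    [Fintype n] [DecidableEq m] [DecidableEq n] {A : Matrix m m R} {B : Matrix n n R}
    (hA : Aᵀ * A = 1) (hB : Bᵀ * B = 1) : (A ⊗ₖ B)ᵀ * (A ⊗ₖ B) = 1 := by
  rw [← kroneckerMap_transpose, ← mul_kronecker_mul, hA, hB, one_kronecker_one]

section frobeniusNorm'

variable {d e : Type*} [Fintype d] [Fintype e]

theorem sum_sum_sq_eq_trace_transpose_mul {R : Type*} [Semiring R] (M : Matrix d e R) :
    ∑ i, ∑ j, M i j ^ 2 = trace (Mᵀ * M) := by
  rw [trace, Finset.sum_comm]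
  simp [mul_apply, sq]

theorem frobeniusNorm'_le_of_sq_le {A B : Matrix d e ℝ}
    (h : ∀ i j, A i j ^ 2 ≤ B i j ^ 2) : frobeniusNorm' A ≤ frobeniusNorm' B :=
  Real.sqrt_le_sqrt <| Finset.sum_le_sum fun i _ => Finset.sum_le_sum fun j _ => h i j

variable [DecidableEq d]

theorem frobeniusNorm'_conj_of_transpose_mul_self_eq_one {Q : Matrix d d ℝ}
    (hQ : Qᵀ * Q = 1) (A : Matrix d d ℝ) : frobeniusNorm' (Q * A * Qᵀ) = frobeniusNorm' A := by
  unfold frobeniusNorm'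
  rw [sum_sum_sq_eq_trace_transpose_mul, sum_sum_sq_eq_trace_transpose_mul]
  have hconj : (Q * A * Qᵀ)ᵀ * (Q * A * Qᵀ) = Q * (Aᵀ * A) * Qᵀ := by
    simp only [transpose_mul, transpose_transpose, Matrix.mul_assoc]
    rw [← Matrix.mul_assoc Qᵀ Q, hQ, Matrix.one_mul]
  rw [hconj, trace_mul_cycle, hQ, Matrix.one_mul]

theorem frobeniusNorm'_sub_diagPart_le (M : Matrix d d ℝ) (D : d → ℝ) :
    frobeniusNorm' (M - diagPart M) ≤ frobeniusNorm' (M - diagonal D) := by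
  refine frobeniusNorm'_le_of_sq_le fun i j => ?_
  rcases eq_or_ne i j with rfl | hij
  · simp [diagPart, sq_nonneg]
  · simp [diagPart, diagonal_apply_ne _ hij]

theorem sub_conj_eq_conj_sub {Q : Matrix d d ℝ} (hQ : Qᵀ * Q = 1) (C D : Matrix d d ℝ) :
    C - Q * D * Qᵀ = Q * (Qᵀ * C * Q - D) * Qᵀ := by
  have hQ' : Q * Qᵀ = 1 := mul_eq_one_comm.mp hQ
  rw [Matrix.mul_sub, Matrix.sub_mul, ← Matrix.mul_assoc, ← Matrix.mul_assoc, hQ',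
    Matrix.one_mul, Matrix.mul_assoc C, hQ', Matrix.mul_one]

theorem frobeniusNorm'_sub_conj_diagPart_le {Q : Matrix d d ℝ} (hQ : Qᵀ * Q = 1)
    (C : Matrix d d ℝ) (D : d → ℝ) :
    frobeniusNorm' (C - Q * diagPart (Qᵀ * C * Q) * Qᵀ) ≤
      frobeniusNorm' (C - Q * diagonal D * Qᵀ) := by
  rw [sub_conj_eq_conj_sub hQ, sub_conj_eq_conj_sub hQ,
    frobeniusNorm'_conj_of_transpose_mul_self_eq_one hQ,
    frobeniusNorm'_conj_of_transpose_mul_self_eq_one hQ]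
  exact frobeniusNorm'_sub_diagPart_le _ D

end frobeniusNorm'

theorem stmt_12_general (m n : ℕ)
    (QL : Matrix (Fin m) (Fin m) ℝ) (QR : Matrix (Fin n) (Fin n) ℝ)
    (hQL : QLᵀ * QL = 1) (hQR : QRᵀ * QR = 1)
    (lamL : Fin m → ℝ) (lamR : Fin n → ℝ)
    (Q : Matrix (Fin m × Fin n) (Fin m × Fin n) ℝ) (hQ : Q = QL ⊗ₖ QR)
    (CShampoo : Matrix (Fin m × Fin n) (Fin m × Fin n) ℝ)
    (hCS : CShampoo =
      Q * Matrix.diagonal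
            (fun ij => Real.sqrt (((Matrix.diagonal lamL) ⊗ₖ (Matrix.diagonal lamR)) ij ij)) *
        Qᵀ) :
    ∀ C : Matrix (Fin m × Fin n) (Fin m × Fin n) ℝ,
      frobeniusNorm' (C - Q * diagPart (Qᵀ * C * Q) * Qᵀ) ≤
        frobeniusNorm' (C - CShampoo) := by
  intro C
  have hQo : Qᵀ * Q = 1 := hQ ▸ kronecker_transpose_mul_self_eq_one hQL hQR
  rw [hCS]
  exact frobeniusNorm'_sub_conj_diagPart_le hQo C _

/-- Let `Q_L, Q_R` be orthogonal and `Λ_L, Λ_R` diagonal with nonnegative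
entries.  With `Q = Q_R ⊗ Q_L` (which, in Mathlib's pair-indexed convention, is `QL ⊗ₖ QR`)
and the Shampoo preconditioner `C^Shampoo = Q (Λ_R ⊗ Λ_L)^{1/2} Qᵀ`, where
`(Λ_R ⊗ Λ_L)^{1/2}` is the diagonal matrix of entrywise square roots of the diagonal of
`Λ_R ⊗ Λ_L`, one has, for every `C ∈ ℝ^{(mn)×(mn)}`,
`‖C - Q diag(Qᵀ C Q) Qᵀ‖_F ≤ ‖C - C^Shampoo‖_F`. -/
theorem stmt_12 (m n : ℕ)
    (QL : Matrix (Fin m) (Fin m) ℝ) (QR : Matrix (Fin n) (Fin n) ℝ)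
    (hQL : QLᵀ * QL = 1) (hQR : QRᵀ * QR = 1)
    (lamL : Fin m → ℝ) (lamR : Fin n → ℝ)
    (hlamL : ∀ i, 0 ≤ lamL i) (hlamR : ∀ j, 0 ≤ lamR j)
    (Q : Matrix (Fin m × Fin n) (Fin m × Fin n) ℝ) (hQ : Q = QL ⊗ₖ QR)
    (CShampoo : Matrix (Fin m × Fin n) (Fin m × Fin n) ℝ)
    (hCS : CShampoo =
      Q * Matrix.diagonal
            (fun ij => Real.sqrt (((Matrix.diagonal lamL) ⊗ₖ (Matrix.diagonal lamR)) ij ij)) *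
        Qᵀ) :
    ∀ C : Matrix (Fin m × Fin n) (Fin m × Fin n) ℝ,
      frobeniusNorm' (C - Q * diagPart (Qᵀ * C * Q) * Qᵀ) ≤
        frobeniusNorm' (C - CShampoo) :=
  stmt_12_general m n QL QR hQL hQR lamL lamR Q hQ CShampoo hCS
end
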